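/- Let n ≥ 1 and let q ∈ ℂ be nonzero and not a root of unity. Let φ be a ℂ-algebra automorphism of 𝔥_n(q) that maps V into V (a graded automorphism). Then there exist a permutation π of Fin n and nonzero scalars A_1, …, A_n, B_1, …, B_n ∈ ℂ such that for every i: φ(x_i) = A_i · x_{π(i)}, φ(y_i) = B_i · y_{π(i)}, and φ(z_i) = A_i B_i · z_{π(i)}. -/

import Mathlib

noncomputable section

open scoped BigOperators

namespace QHeisenberg

/-- Index type for the `3n` generators: `x`-, `y`-, and `z`-variables. -/
abbrev GenIdx (n : ℕ) := Fin n ⊕ (Fin n ⊕ Fin n)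

/-- The `x_i` generator in the free algebra. -/
def fX (n : ℕ) (i : Fin n) : FreeAlgebra ℂ (GenIdx n) := FreeAlgebra.ι ℂ (Sum.inl i)

/-- The `y_i` generator in the free algebra. -/
def fY (n : ℕ) (i : Fin n) : FreeAlgebra ℂ (GenIdx n) := FreeAlgebra.ι ℂ (Sum.inr (Sum.inl i))

/-- The `z_i` generator in the free algebra. -/
def fZ (n : ℕ) (i : Fin n) : FreeAlgebra ℂ (GenIdx n) := FreeAlgebra.ι ℂ (Sum.inr (Sum.inr i))

/-- The defining relations of the q-Heisenberg algebra `𝔥_n(q)`. -/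
inductive Rel (n : ℕ) (q : ℂ) :
    FreeAlgebra ℂ (GenIdx n) → FreeAlgebra ℂ (GenIdx n) → Prop
  | xx (i j : Fin n) : Rel n q (fX n i * fX n j) (fX n j * fX n i)
  | yy (i j : Fin n) : Rel n q (fY n i * fY n j) (fY n j * fY n i)
  | zz (i j : Fin n) : Rel n q (fZ n i * fZ n j) (fZ n j * fZ n i)
  | xz (i : Fin n) : Rel n q (fX n i * fZ n i) (q • (fZ n i * fX n i))
  | yz (i : Fin n) : Rel n q (fY n i * fZ n i) (q⁻¹ • (fZ n i * fY n i))
  | xy (i : Fin n) : Rel n q (fX n i * fY n i) (q⁻¹ • (fY n i * fX n i) + fZ n i)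
  | xyne (i j : Fin n) : i ≠ j → Rel n q (fX n i * fY n j) (fY n j * fX n i)
  | xzne (i j : Fin n) : i ≠ j → Rel n q (fX n i * fZ n j) (fZ n j * fX n i)
  | yzne (i j : Fin n) : i ≠ j → Rel n q (fY n i * fZ n j) (fZ n j * fY n i)

/-- The q-Heisenberg algebra `𝔥_n(q)`. -/
abbrev H (n : ℕ) (q : ℂ) := RingQuot (Rel n q)

/-- The generator `x_i` of `𝔥_n(q)`. -/
def X (n : ℕ) (q : ℂ) (i : Fin n) : H n q := RingQuot.mkAlgHom ℂ (Rel n q) (fX n i)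

/-- The generator `y_i` of `𝔥_n(q)`. -/
def Y (n : ℕ) (q : ℂ) (i : Fin n) : H n q := RingQuot.mkAlgHom ℂ (Rel n q) (fY n i)

/-- The generator `z_i` of `𝔥_n(q)`. -/
def Z (n : ℕ) (q : ℂ) (i : Fin n) : H n q := RingQuot.mkAlgHom ℂ (Rel n q) (fZ n i)

/-- `q` is not a root of unity: `q ^ k ≠ 1` for every `k ≥ 1`. -/
def NotRootOfUnity (q : ℂ) : Prop := ∀ k : ℕ, 1 ≤ k → q ^ k ≠ 1

end QHeisenberg

namespace QHeisenberg

/-- The `ℂ`-linear span `V` of the `3n` generators `x_i, y_i, z_i` of `𝔥_n(q)`. -/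
def genSpan (n : ℕ) (q : ℂ) : Submodule ℂ (H n q) :=
  Submodule.span ℂ (Set.range (X n q) ∪ Set.range (Y n q) ∪ Set.range (Z n q))


/-!
For every weight vector `w ∈ ℂⁿ`, `𝔥_n(q)` acts on `ℂ[t₁, …, tₙ]`: `y_j` multiplies by `t_j`, `z_j`
scales `t^d` by `w_j q^(d_j)`, and `x_j` sends `t^d` to `w_j [d_j]_q t^(d - e_j)`. These
representations replace a PBW basis: for `u = φ(x_i)`, `v = φ(y_i)`, `s = φ(z_i)` in `V`, the
matrix coefficients `[1] ρ_w(·) 1`, `[t_m] ρ_w(·) 1`, `[1] ρ_w(·) t_m` of the three relations they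
satisfy are polynomial identities in `w`. With `a₁, b₁` (resp. `a₂, b₂`) the `x`- and
`y`-coordinates of `u` (resp. `v`), the relation `uv = q⁻¹vu + s` gives
`s = ∑ (a₁ b₂ - q⁻¹ b₁ a₂)_j z_j`, so some `z_k` occurs in `s ≠ 0`; then `us = q su` and
`vs = q⁻¹ sv`, with `q ≠ 1` and `q² ≠ 1`, leave only `u = A x_k` and `v = B y_k`. Injectivity of
`φ` makes `i ↦ k` a permutation.
-/

open MvPolynomial Finsupp

variable {n : ℕ} {q : ℂ}

/-- The symmetric quantum integer `[k]_q = q^(k-1) + q^(k-3) + ⋯ + q^(1-k)`; its recursion is what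
the relation `x_j y_j = q⁻¹ y_j x_j + z_j` demands of the operators below. -/
def qInt (q : ℂ) : ℕ → ℂ
  | 0 => 0
  | k + 1 => q⁻¹ * qInt q k + q ^ k

section Representation

variable (q) (w : Fin n → ℂ)

def xOp (j : Fin n) : Module.End ℂ (MvPolynomial (Fin n) ℂ) :=
  (basisMonomials (Fin n) ℂ).constr ℂ fun d => (w j * qInt q (d j)) • monomial (d - single j 1) 1

def yOp (j : Fin n) : Module.End ℂ (MvPolynomial (Fin n) ℂ) :=
  (basisMonomials (Fin n) ℂ).constr ℂ fun d => monomial (d + single j 1) 1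

def zOp (j : Fin n) : Module.End ℂ (MvPolynomial (Fin n) ℂ) :=
  (basisMonomials (Fin n) ℂ).constr ℂ fun d => (w j * q ^ d j) • monomial d 1

variable {q w}

@[simp]
lemma xOp_monomial (j : Fin n) (d : Fin n →₀ ℕ) :
    xOp q w j (monomial d 1) = (w j * qInt q (d j)) • monomial (d - single j 1) 1 := by
  simpa [xOp] using (basisMonomials (Fin n) ℂ).constr_basis ℂ
    (fun d => (w j * qInt q (d j)) • monomial (d - single j 1) (1 : ℂ)) d

@[simp]
lemma yOp_monomial (j : Fin n) (d : Fin n →₀ ℕ) :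
    yOp j (monomial d 1) = monomial (d + single j 1) 1 := by
  simpa [yOp] using (basisMonomials (Fin n) ℂ).constr_basis ℂ
    (fun d => monomial (d + single j 1) (1 : ℂ)) d

@[simp]
lemma zOp_monomial (j : Fin n) (d : Fin n →₀ ℕ) :
    zOp q w j (monomial d 1) = (w j * q ^ d j) • monomial d 1 := by
  simpa [zOp] using (basisMonomials (Fin n) ℂ).constr_basis ℂ
    (fun d => (w j * q ^ d j) • monomial d (1 : ℂ)) d

lemma ext_monomial {f g : Module.End ℂ (MvPolynomial (Fin n) ℂ)}
    (h : ∀ d, f (monomial d 1) = g (monomial d 1)) : f = g :=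
  (basisMonomials (Fin n) ℂ).ext fun d => by simpa using h d

lemma xOp_mul_xOp_comm (i j : Fin n) : xOp q w i * xOp q w j = xOp q w j * xOp q w i := by
  refine ext_monomial fun d => ?_
  obtain rfl | hij := eq_or_ne i j
  · rfl
  have hd : d - single i 1 - single j 1 = d - single j 1 - single i 1 := by
    ext k; simp only [tsub_apply]; omega
  simp only [Module.End.mul_apply, xOp_monomial, map_smul, smul_smul, tsub_apply,
    single_eq_of_ne hij, single_eq_of_ne' hij, tsub_zero, hd]
  ring_nf

lemma yOp_mul_yOp_comm (i j : Fin n) : yOp i * yOp j = yOp j * yOp i :=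
  ext_monomial fun d => by simp only [Module.End.mul_apply, yOp_monomial, add_right_comm]

lemma zOp_mul_zOp_comm (i j : Fin n) : zOp q w i * zOp q w j = zOp q w j * zOp q w i := by
  refine ext_monomial fun d => ?_
  simp only [Module.End.mul_apply, zOp_monomial, map_smul, smul_smul]
  ring_nf

lemma xOp_mul_zOp_self (i : Fin n) : xOp q w i * zOp q w i = q • (zOp q w i * xOp q w i) := by
  refine ext_monomial fun d => ?_
  simp only [Module.End.mul_apply, xOp_monomial, zOp_monomial, map_smul, smul_smul,
    LinearMap.smul_apply, tsub_apply, single_eq_same]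
  rcases hd : d i with _ | k
  · simp [qInt]
  · simp only [Nat.add_sub_cancel]
    ring_nf

lemma yOp_mul_zOp_self (hq : q ≠ 0) (i : Fin n) :
    yOp i * zOp q w i = q⁻¹ • (zOp q w i * yOp i) := by
  refine ext_monomial fun d => ?_
  simp only [Module.End.mul_apply, yOp_monomial, zOp_monomial, map_smul, smul_smul,
    LinearMap.smul_apply, Finsupp.add_apply, single_eq_same, pow_succ]
  field_simp

lemma xOp_mul_yOp_self (i : Fin n) :
    xOp q w i * yOp i = q⁻¹ • (yOp i * xOp q w i) + zOp q w i := by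
  refine ext_monomial fun d => ?_
  simp only [Module.End.mul_apply, LinearMap.add_apply, LinearMap.smul_apply, xOp_monomial,
    yOp_monomial, zOp_monomial, map_smul, Finsupp.add_apply, single_eq_same,
    add_tsub_cancel_right, smul_smul]
  rcases hd : d i with _ | k
  · simp [qInt]
  · have : d - single i 1 + single i 1 = d := by
      ext k; obtain rfl | hk := eq_or_ne i k <;> simp [*]
    rw [this, ← add_smul, qInt]
    ring_nf

lemma xOp_mul_yOp_of_ne {i j : Fin n} (h : i ≠ j) : xOp q w i * yOp j = yOp j * xOp q w i := by
  refine ext_monomial fun d => ?_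
  have hd : d + single j 1 - single i 1 = d - single i 1 + single j 1 := by
    ext k; simp only [tsub_apply, Finsupp.add_apply, single_apply]; split_ifs <;> omega
  simp [Finsupp.add_apply, single_eq_of_ne h, hd]

lemma xOp_mul_zOp_of_ne {i j : Fin n} (h : i ≠ j) :
    xOp q w i * zOp q w j = zOp q w j * xOp q w i := by
  refine ext_monomial fun d => ?_
  simp only [Module.End.mul_apply, xOp_monomial, zOp_monomial, map_smul, smul_smul, tsub_apply,
    single_eq_of_ne' h, tsub_zero]
  ring_nf

lemma yOp_mul_zOp_of_ne {i j : Fin n} (h : i ≠ j) : yOp i * zOp q w j = zOp q w j * yOp i := by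
  refine ext_monomial fun d => ?_
  simp [Finsupp.add_apply, single_eq_of_ne' h]

end Representation

section PolyRep

variable (hq : q ≠ 0) (w : Fin n → ℂ)

def polyRep : H n q →ₐ[ℂ] Module.End ℂ (MvPolynomial (Fin n) ℂ) :=
  RingQuot.liftAlgHom ℂ ⟨FreeAlgebra.lift ℂ (Sum.elim (xOp q w) (Sum.elim yOp (zOp q w))),
    fun _ _ h => by
      induction h with
      | xx i j => simpa [fX] using xOp_mul_xOp_comm i j
      | yy i j => simpa [fY] using yOp_mul_yOp_comm i j
      | zz i j => simpa [fZ] using zOp_mul_zOp_comm i j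
      | xz i => simpa [fX, fZ] using xOp_mul_zOp_self i
      | yz i => simpa [fY, fZ] using yOp_mul_zOp_self hq i
      | xy i => simpa [fX, fY, fZ] using xOp_mul_yOp_self i
      | xyne i j h => simpa [fX, fY] using xOp_mul_yOp_of_ne h
      | xzne i j h => simpa [fX, fZ] using xOp_mul_zOp_of_ne h
      | yzne i j h => simpa [fY, fZ] using yOp_mul_zOp_of_ne h⟩

@[simp]
lemma polyRep_X (i : Fin n) : polyRep hq w (X n q i) = xOp q w i := by
  simp [polyRep, X, fX]

@[simp]
lemma polyRep_Y (i : Fin n) : polyRep hq w (Y n q i) = yOp i := by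
  simp [polyRep, Y, fY]

@[simp]
lemma polyRep_Z (i : Fin n) : polyRep hq w (Z n q i) = zOp q w i := by
  simp [polyRep, Z, fZ]

end PolyRep

lemma X_mul_Y_self (i : Fin n) : X n q i * Y n q i = q⁻¹ • (Y n q i * X n q i) + Z n q i := by
  simpa only [X, Y, Z, map_mul, map_add, map_smul] using RingQuot.mkAlgHom_rel ℂ (Rel.xy i)

lemma X_mul_Z_self (i : Fin n) : X n q i * Z n q i = q • (Z n q i * X n q i) := by
  simpa only [X, Z, map_mul, map_smul] using RingQuot.mkAlgHom_rel ℂ (Rel.xz i)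

lemma Y_mul_Z_self (i : Fin n) : Y n q i * Z n q i = q⁻¹ • (Z n q i * Y n q i) := by
  simpa only [Y, Z, map_mul, map_smul] using RingQuot.mkAlgHom_rel ℂ (Rel.yz i)

lemma X_mem_genSpan (i : Fin n) : X n q i ∈ genSpan n q :=
  Submodule.subset_span (.inl (.inl ⟨i, rfl⟩))

lemma Y_mem_genSpan (i : Fin n) : Y n q i ∈ genSpan n q :=
  Submodule.subset_span (.inl (.inr ⟨i, rfl⟩))

lemma Z_mem_genSpan (i : Fin n) : Z n q i ∈ genSpan n q :=
  Submodule.subset_span (.inr ⟨i, rfl⟩)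

variable (q) in
def spanElem (a b c : Fin n → ℂ) : H n q :=
  ∑ j, (a j • X n q j + b j • Y n q j + c j • Z n q j)

lemma X_eq_spanElem (i : Fin n) : X n q i = spanElem q (Pi.single i 1) 0 0 := by
  classical
  simp [spanElem, Pi.single_apply, ite_smul]

lemma Y_eq_spanElem (i : Fin n) : Y n q i = spanElem q 0 (Pi.single i 1) 0 := by
  classical
  simp [spanElem, Pi.single_apply, ite_smul]

lemma Z_eq_spanElem (i : Fin n) : Z n q i = spanElem q 0 0 (Pi.single i 1) := by
  classical
  simp [spanElem, Pi.single_apply, ite_smul]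

lemma exists_eq_spanElem {v : H n q} (hv : v ∈ genSpan n q) :
    ∃ a b c : Fin n → ℂ, v = spanElem q a b c := by
  induction hv using Submodule.span_induction with
  | mem x hx =>
    rcases hx with (⟨i, rfl⟩ | ⟨i, rfl⟩) | ⟨i, rfl⟩
    · exact ⟨_, _, _, X_eq_spanElem i⟩
    · exact ⟨_, _, _, Y_eq_spanElem i⟩
    · exact ⟨_, _, _, Z_eq_spanElem i⟩
  | zero => exact ⟨0, 0, 0, by simp [spanElem]⟩
  | add x y _ _ hx hy =>
    obtain ⟨a, b, c, rfl⟩ := hx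
    obtain ⟨a', b', c', rfl⟩ := hy
    refine ⟨a + a', b + b', c + c', ?_⟩
    simp only [spanElem, ← Finset.sum_add_distrib, Pi.add_apply, add_smul]
    exact Finset.sum_congr rfl fun _ _ => by abel
  | smul μ x _ hx =>
    obtain ⟨a, b, c, rfl⟩ := hx
    exact ⟨μ • a, μ • b, μ • c, by simp [spanElem, Finset.smul_sum, smul_add, smul_smul]⟩

lemma spanElem_eq_of_forall_ne {a b c : Fin n → ℂ} {k : Fin n}
    (h : ∀ m ≠ k, a m = 0 ∧ b m = 0 ∧ c m = 0) :
    spanElem q a b c = a k • X n q k + b k • Y n q k + c k • Z n q k :=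
  Finset.sum_eq_single k (fun m _ hm => by simp [h m hm]) (by simp)

lemma single_add_single_ne_single {α : Type*} (i j k : α) :
    single i 1 + single j 1 ≠ single k 1 := fun h => by
  simpa using congrArg degree h

lemma single_add_single_tsub_ne_zero {α : Type*} (i j k : α) :
    single i 1 + single j 1 - single k 1 ≠ 0 := fun h => by
  simpa using degree_mono (tsub_eq_zero_iff_le.mp h)

section Coefficients

variable (hq : q ≠ 0) (w : Fin n → ℂ)

def repCoeff (d e : Fin n →₀ ℕ) : H n q →ₗ[ℂ] ℂ :=
  lcoeff ℂ d ∘ₗ LinearMap.applyₗ (monomial e 1) ∘ₗ (polyRep hq w).toLinearMap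

lemma repCoeff_apply (d e : Fin n →₀ ℕ) (x : H n q) :
    repCoeff hq w d e x = coeff d (polyRep hq w x (monomial e 1)) := rfl

lemma polyRep_spanElem_monomial (a b c : Fin n → ℂ) (d : Fin n →₀ ℕ) :
    polyRep hq w (spanElem q a b c) (monomial d 1) =
      ∑ j, ((a j * (w j * qInt q (d j))) • monomial (d - single j 1) 1
        + b j • monomial (d + single j 1) 1 + (c j * (w j * q ^ d j)) • monomial d 1) := by
  simp [spanElem, LinearMap.sum_apply, smul_smul]

lemma polyRep_spanElem_one (a b c : Fin n → ℂ) :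
    polyRep hq w (spanElem q a b c) 1 = (c ⬝ᵥ w) • 1 + ∑ j, b j • monomial (single j 1) 1 := by
  rw [← C_1, ← monomial_zero', polyRep_spanElem_monomial]
  simp [qInt, Finset.sum_add_distrib, dotProduct, Finset.sum_smul, add_comm]

lemma polyRep_spanElem_single (a b c : Fin n → ℂ) (m : Fin n) :
    polyRep hq w (spanElem q a b c) (monomial (single m 1) 1) =
      (w m * a m) • 1 + ∑ j, b j • monomial (single m 1 + single j 1) 1
        + (c ⬝ᵥ w + (q - 1) * (c m * w m)) • monomial (single m 1) 1 := by
  classical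
  rw [polyRep_spanElem_monomial]
  simp only [Finset.sum_add_distrib, single_apply]
  congr 1
  · congr 1
    · rw [Finset.sum_eq_single m (fun j _ hj => by simp [Ne.symm hj, qInt]) (by simp)]
      simp [qInt, mul_comm, ← C_1, ← monomial_zero']
  · simp only [← Finset.sum_smul]
    congr 1
    have hterm : ∀ j, c j * (w j * q ^ (if m = j then 1 else 0)) =
        c j * w j + if m = j then (q - 1) * (c m * w m) else 0 := by
      intro j; split_ifs with h <;> [subst h; skip] <;> ring
    simp only [hterm, Finset.sum_add_distrib, Finset.sum_ite_eq, Finset.mem_univ, if_true,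
      dotProduct]

variable (a b c a' b' c' : Fin n → ℂ) (m : Fin n)

lemma repCoeff_zero_apply (d : Fin n →₀ ℕ) (x : H n q) :
    repCoeff hq w d 0 x = coeff d (polyRep hq w x 1) := by
  rw [repCoeff_apply, monomial_zero', C_1]

lemma repCoeff_zero_zero_spanElem : repCoeff hq w 0 0 (spanElem q a b c) = c ⬝ᵥ w := by
  simp [repCoeff_zero_apply, polyRep_spanElem_one, coeff_sum, coeff_monomial]

lemma repCoeff_single_zero_spanElem : repCoeff hq w (single m 1) 0 (spanElem q a b c) = b m := by
  simp [repCoeff_zero_apply, polyRep_spanElem_one, coeff_sum, coeff_monomial, coeff_one,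
    eq_comm (a := (0 : Fin n →₀ ℕ)), single_left_inj]

lemma repCoeff_zero_single_spanElem :
    repCoeff hq w 0 (single m 1) (spanElem q a b c) = w m * a m := by
  simp [repCoeff_apply, polyRep_spanElem_single, coeff_sum, coeff_monomial]

lemma repCoeff_single_single_spanElem (k : Fin n) :
    repCoeff hq w (single k 1) (single m 1) (spanElem q a b c) =
      if m = k then c ⬝ᵥ w + (q - 1) * (c m * w m) else 0 := by
  simp [repCoeff_apply, polyRep_spanElem_single, coeff_sum, coeff_monomial, coeff_one,
    single_add_single_ne_single, eq_comm (a := (0 : Fin n →₀ ℕ)), single_left_inj]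

lemma repCoeff_zero_single_add_single_spanElem (j : Fin n) :
    repCoeff hq w 0 (single m 1 + single j 1) (spanElem q a b c) = 0 := by
  simp [repCoeff_apply, polyRep_spanElem_monomial, coeff_sum, coeff_monomial,
    single_add_single_tsub_ne_zero]

lemma repCoeff_zero_zero_spanElem_mul :
    repCoeff hq w 0 0 (spanElem q a b c * spanElem q a' b' c') =
      (c' ⬝ᵥ w) * (c ⬝ᵥ w) + ∑ j, b' j * (w j * a j) := by
  rw [repCoeff_zero_apply, map_mul, Module.End.mul_apply, polyRep_spanElem_one]
  simp only [map_add, map_sum, map_smul, coeff_add, coeff_sum, coeff_smul, ← repCoeff_apply,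
    ← repCoeff_zero_apply, repCoeff_zero_zero_spanElem, repCoeff_zero_single_spanElem,
    smul_eq_mul]

lemma repCoeff_single_zero_spanElem_mul :
    repCoeff hq w (single m 1) 0 (spanElem q a b c * spanElem q a' b' c') =
      (c' ⬝ᵥ w) * b m + b' m * (c ⬝ᵥ w + (q - 1) * (c m * w m)) := by
  rw [repCoeff_zero_apply, map_mul, Module.End.mul_apply, polyRep_spanElem_one]
  simp only [map_add, map_sum, map_smul, coeff_add, coeff_sum, coeff_smul, ← repCoeff_apply,
    ← repCoeff_zero_apply, repCoeff_single_zero_spanElem, repCoeff_single_single_spanElem,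
    smul_eq_mul, mul_ite, mul_zero, Finset.sum_ite_eq', Finset.mem_univ, if_true]

lemma repCoeff_zero_single_spanElem_mul :
    repCoeff hq w 0 (single m 1) (spanElem q a b c * spanElem q a' b' c') =
      w m * a' m * (c ⬝ᵥ w) + (c' ⬝ᵥ w + (q - 1) * (c' m * w m)) * (w m * a m) := by
  rw [repCoeff_apply, map_mul, Module.End.mul_apply, polyRep_spanElem_single]
  simp only [map_add, map_sum, map_smul, coeff_add, coeff_sum, coeff_smul, ← repCoeff_apply,
    ← repCoeff_zero_apply, repCoeff_zero_zero_spanElem, repCoeff_zero_single_spanElem,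
    repCoeff_zero_single_add_single_spanElem, smul_eq_mul, mul_zero, Finset.sum_const_zero,
    add_zero]

end Coefficients

lemma Z_ne_zero (hq : q ≠ 0) (i : Fin n) : Z n q i ≠ 0 := fun h => by
  simpa [Z_eq_spanElem, repCoeff_zero_zero_spanElem] using congrArg (repCoeff hq 1 0 0) h

lemma eq_of_smul_X_eq_smul_X (hq : q ≠ 0) {A B : ℂ} {i j : Fin n} (hA : A ≠ 0)
    (h : A • X n q i = B • X n q j) : i = j := by
  by_contra hij
  simpa [X_eq_spanElem, repCoeff_zero_single_spanElem, hij, hA] using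
    congrArg (repCoeff hq 1 0 (single i 1)) h

lemma eq_zero_of_dotProduct_mul_dotProduct_eq_zero {ι R : Type*} [Fintype ι] [CommRing R]
    [NoZeroDivisors R] {u v : ι → R} (hv : v ≠ 0) (h : ∀ w, (u ⬝ᵥ w) * (v ⬝ᵥ w) = 0) : u = 0 := by
  classical
  by_contra hu
  obtain ⟨i, hi⟩ : ∃ i, u i ≠ 0 := Function.ne_iff.mp hu
  obtain ⟨j, hj⟩ : ∃ j, v j ≠ 0 := Function.ne_iff.mp hv
  have hvi : v i = 0 := by simpa [hi] using h (Pi.single i 1)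
  have huj : u j = 0 := by simpa [hj] using h (Pi.single j 1)
  have hij : i ≠ j := by rintro rfl; exact hj hvi
  have := h (Pi.single i 1 + Pi.single j 1)
  simp only [dotProduct_add, dotProduct_single, hvi, huj, mul_one, add_zero, zero_add] at this
  exact mul_ne_zero hi hj this

lemma coords_of_mul_eq_inv_smul_mul_add (hq : q ≠ 0) {a₁ b₁ c₁ a₂ b₂ c₂ a₃ b₃ c₃ : Fin n → ℂ}
    (h : spanElem q a₁ b₁ c₁ * spanElem q a₂ b₂ c₂ =
      q⁻¹ • (spanElem q a₂ b₂ c₂ * spanElem q a₁ b₁ c₁) + spanElem q a₃ b₃ c₃) :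
    a₃ = 0 ∧ b₃ = 0 ∧ c₃ = a₁ * b₂ - q⁻¹ • (b₁ * a₂) := by
  have key := fun w d e => congrArg (repCoeff hq w d e) h
  simp only [map_add, map_smul, smul_eq_mul] at key
  refine ⟨funext fun m => ?_, funext fun m => ?_, funext fun m => ?_⟩
  · have e₁ := key (Pi.single m 1) 0 (single m 1)
    have e₂ := key (Pi.single m (-1)) 0 (single m 1)
    -- the weights `±e_m` separate the parts of degree 1 and 2 in `w`
    simp only [repCoeff_zero_single_spanElem_mul, Pi.single_eq_same, one_mul, dotProduct_single,
      mul_one, repCoeff_zero_single_spanElem, neg_mul, mul_neg, neg_neg] at e₁ e₂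
    simp only [Pi.zero_apply]
    linear_combination (e₂ - e₁) / 2
  · have e := key 0 (single m 1) 0
    simp only [repCoeff_single_zero_spanElem_mul, dotProduct_zero, zero_mul, Pi.zero_apply,
      mul_zero, add_zero, repCoeff_single_zero_spanElem, zero_add] at e
    exact e.symm
  · have e₁ := key (Pi.single m 1) 0 0
    have e₂ := key (Pi.single m (-1)) 0 0
    simp only [repCoeff_zero_zero_spanElem_mul, dotProduct_single, mul_one, Pi.single_apply,
      ite_mul, one_mul, zero_mul, mul_ite, mul_zero, Finset.sum_ite_eq', Finset.mem_univ,
      ↓reduceIte, repCoeff_zero_zero_spanElem, mul_neg, neg_mul, neg_neg] at e₁ e₂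
    simp only [Pi.sub_apply, Pi.mul_apply, Pi.smul_apply, smul_eq_mul]
    linear_combination (e₂ - e₁) / 2

lemma weight_identities_of_mul_eq_smul_mul (hq : q ≠ 0) {μ : ℂ} {a b c l : Fin n → ℂ}
    (h : spanElem q a b c * spanElem q 0 0 l = μ • (spanElem q 0 0 l * spanElem q a b c))
    (w : Fin n → ℂ) :
    c ⬝ᵥ w * l ⬝ᵥ w * (1 - μ) = 0 ∧
      (∀ m, b m * ((1 - μ) * l ⬝ᵥ w - μ * (q - 1) * (l m * w m)) = 0) ∧
      ∀ m, w m * a m * ((1 - μ) * l ⬝ᵥ w + (q - 1) * (l m * w m)) = 0 := by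
  have key := fun d e => congrArg (repCoeff hq w d e) h
  simp only [map_smul, smul_eq_mul] at key
  refine ⟨?_, fun m => ?_, fun m => ?_⟩
  · have e := key 0 0
    simp only [repCoeff_zero_zero_spanElem_mul, Pi.zero_apply, zero_mul, Finset.sum_const_zero,
      add_zero, mul_zero] at e
    linear_combination e
  · have e := key (single m 1) 0
    simp only [repCoeff_single_zero_spanElem_mul, Pi.zero_apply, zero_mul, add_zero, mul_zero,
      zero_add] at e
    linear_combination e
  · have e := key 0 (single m 1)
    simp only [repCoeff_zero_single_spanElem_mul, Pi.zero_apply, mul_zero, zero_mul, zero_add,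
      add_zero] at e
    linear_combination e

lemma coords_of_mul_eq_smul_mul (hq : q ≠ 0) {μ : ℂ} (hμ : μ ≠ 1) {a b c l : Fin n → ℂ}
    {k : Fin n} (hk : l k ≠ 0)
    (h : spanElem q a b c * spanElem q 0 0 l = μ • (spanElem q 0 0 l * spanElem q a b c)) :
    c = 0 ∧ (∀ m ≠ k, a m = 0 ∧ b m = 0) ∧ a k * (q - μ) = 0 ∧ b k * (1 - μ * q) = 0 := by
  have hμ' : 1 - μ ≠ 0 := sub_ne_zero.mpr hμ.symm
  have hc : c = 0 :=
    eq_zero_of_dotProduct_mul_dotProduct_eq_zero (v := l) (fun hl => hk (by simp [hl])) fun w =>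
      (mul_eq_zero.mp (weight_identities_of_mul_eq_smul_mul hq h w).1).resolve_right hμ'
  have hb m w := (weight_identities_of_mul_eq_smul_mul hq h w).2.1 m
  have ha m w := (weight_identities_of_mul_eq_smul_mul hq h w).2.2 m
  refine ⟨hc, fun m hm => ⟨?_, ?_⟩, ?_, ?_⟩
  · have e₁ := ha m (Pi.single m 1 + Pi.single k 1)
    have e₀ := ha m (Pi.single m 1)
    simp only [Pi.single_eq_same, one_mul, dotProduct_single, mul_one, Pi.add_apply, ne_eq, hm,
      not_false_eq_true, Pi.single_eq_of_ne, add_zero, dotProduct_add] at e₀ e₁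
    have : a m * (l k * (1 - μ)) = 0 := by linear_combination e₁ - e₀
    exact (mul_eq_zero.mp this).resolve_right (mul_ne_zero hk hμ')
  · have e := hb m (Pi.single k 1)
    simp only [dotProduct_single, mul_one, ne_eq, hm, not_false_eq_true, Pi.single_eq_of_ne,
      mul_zero, sub_zero] at e
    have : b m * (l k * (1 - μ)) = 0 := by linear_combination e
    exact (mul_eq_zero.mp this).resolve_right (mul_ne_zero hk hμ')
  · have e := ha k (Pi.single k 1)
    simp only [Pi.single_eq_same, one_mul, dotProduct_single, mul_one] at e
    exact (mul_eq_zero.mp (by linear_combination e : a k * (q - μ) * l k = 0)).resolve_right hk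
  · have e := hb k (Pi.single k 1)
    simp only [dotProduct_single, mul_one, Pi.single_eq_same] at e
    exact (mul_eq_zero.mp (by linear_combination e : b k * (1 - μ * q) * l k = 0)).resolve_right hk

theorem exists_eq_smul_gens_of_relations (hq : q ≠ 0) (hq2 : q ^ 2 ≠ 1) {u v s : H n q}
    (hu : u ∈ genSpan n q) (hv : v ∈ genSpan n q) (hs : s ∈ genSpan n q) (hs0 : s ≠ 0)
    (hxy : u * v = q⁻¹ • (v * u) + s) (hxz : u * s = q • (s * u))
    (hyz : v * s = q⁻¹ • (s * v)) :
    ∃ (k : Fin n) (A B : ℂ), A ≠ 0 ∧ B ≠ 0 ∧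
      u = A • X n q k ∧ v = B • Y n q k ∧ s = (A * B) • Z n q k := by
  obtain ⟨a₁, b₁, c₁, rfl⟩ := exists_eq_spanElem hu
  obtain ⟨a₂, b₂, c₂, rfl⟩ := exists_eq_spanElem hv
  obtain ⟨a₃, b₃, c₃, rfl⟩ := exists_eq_spanElem hs
  obtain ⟨rfl, rfl, rfl⟩ := coords_of_mul_eq_inv_smul_mul_add hq hxy
  obtain ⟨k, hk⟩ : ∃ k, (a₁ * b₂ - q⁻¹ • (b₁ * a₂)) k ≠ 0 := by
    by_contra! h
    exact hs0 (by simp [spanElem, h])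
  have hq1 : q ≠ 1 := by rintro rfl; simp at hq2
  obtain ⟨rfl, h₁, -, hb₁⟩ := coords_of_mul_eq_smul_mul hq hq1 hk hxz
  obtain ⟨rfl, h₂, ha₂, -⟩ := coords_of_mul_eq_smul_mul hq (inv_ne_one.mpr hq1) hk hyz
  have hb₁k : b₁ k = 0 :=
    (mul_eq_zero.mp hb₁).resolve_right fun h => hq2 (by linear_combination -h)
  have ha₂k : a₂ k = 0 := (mul_eq_zero.mp ha₂).resolve_right fun h => hq2 <| by
    field_simp at h
    linear_combination h
  simp only [Pi.sub_apply, Pi.mul_apply, Pi.smul_apply, hb₁k, zero_mul, smul_zero, sub_zero] at hk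
  refine ⟨k, a₁ k, b₂ k, left_ne_zero_of_mul hk, right_ne_zero_of_mul hk, ?_, ?_, ?_⟩
  · rw [spanElem_eq_of_forall_ne (k := k) (c := 0) fun m hm => ⟨(h₁ m hm).1, (h₁ m hm).2, rfl⟩]
    simp [hb₁k]
  · rw [spanElem_eq_of_forall_ne (k := k) (c := 0) fun m hm => ⟨(h₂ m hm).1, (h₂ m hm).2, rfl⟩]
    simp [ha₂k]
  · rw [spanElem_eq_of_forall_ne (k := k) (a := 0) (b := 0)
      fun m hm => ⟨rfl, rfl, by simp [(h₁ m hm).1, (h₁ m hm).2]⟩]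
    simp [hb₁k]

theorem graded_automorphism_form_general (n : ℕ) (q : ℂ) (hq : q ≠ 0)
    (hq' : NotRootOfUnity q) (φ : H n q ≃ₐ[ℂ] H n q)
    (hφ : ∀ v ∈ genSpan n q, φ v ∈ genSpan n q) :
    ∃ (π : Equiv.Perm (Fin n)) (A B : Fin n → ℂ),
      (∀ i, A i ≠ 0) ∧ (∀ i, B i ≠ 0) ∧
        ∀ i, φ (X n q i) = A i • X n q (π i) ∧
          φ (Y n q i) = B i • Y n q (π i) ∧
          φ (Z n q i) = (A i * B i) • Z n q (π i) := by
  have key (i : Fin n) : ∃ (k : Fin n) (A B : ℂ), A ≠ 0 ∧ B ≠ 0 ∧ φ (X n q i) = A • X n q k ∧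
      φ (Y n q i) = B • Y n q k ∧ φ (Z n q i) = (A * B) • Z n q k :=
    exists_eq_smul_gens_of_relations hq (hq' 2 one_le_two)
      (hφ _ (X_mem_genSpan i)) (hφ _ (Y_mem_genSpan i)) (hφ _ (Z_mem_genSpan i))
      ((map_ne_zero_iff φ φ.injective).mpr (Z_ne_zero hq i))
      (by rw [← map_mul, ← map_mul, ← map_smul, ← map_add, X_mul_Y_self])
      (by rw [← map_mul, ← map_mul, ← map_smul, X_mul_Z_self])
      (by rw [← map_mul, ← map_mul, ← map_smul, Y_mul_Z_self])
  choose π A B hA hB hX hY hZ using key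
  have hπ : Function.Injective π := fun i j hij =>
    eq_of_smul_X_eq_smul_X hq (hA j) <| φ.injective <| by
      rw [map_smul, map_smul, hX, hX, hij, smul_smul, smul_smul, mul_comm]
  exact ⟨Equiv.ofBijective π hπ.bijective_of_finite, A, B, hA, hB, fun i => ⟨hX i, hY i, hZ i⟩⟩

/-- For `q` nonzero and not a root of unity, any graded `ℂ`-algebra
automorphism `φ` of `𝔥_n(q)` is of the form `φ(x_i) = A_i x_{π(i)}`,
`φ(y_i) = B_i y_{π(i)}`, `φ(z_i) = A_i B_i z_{π(i)}` for some permutation `π` and nonzero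
scalars `A_i, B_i`. -/
theorem graded_automorphism_form (n : ℕ) (hn : 1 ≤ n) (q : ℂ) (hq : q ≠ 0)
    (hq' : NotRootOfUnity q) (φ : H n q ≃ₐ[ℂ] H n q)
    (hφ : ∀ v ∈ genSpan n q, φ v ∈ genSpan n q) :
    ∃ (π : Equiv.Perm (Fin n)) (A B : Fin n → ℂ),
      (∀ i, A i ≠ 0) ∧ (∀ i, B i ≠ 0) ∧
        ∀ i, φ (X n q i) = A i • X n q (π i) ∧
          φ (Y n q i) = B i • Y n q (π i) ∧
          φ (Z n q i) = (A i * B i) • Z n q (π i) :=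
  graded_automorphism_form_general n q hq hq' φ hφ

end QHeisenberg
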